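/- Assume integer scores u_k = k for k = 1,…,r. A positive probability distribution π on I_V satisfies π_i = π^S_i · exp( Σ_{s=1}^T α_s i_s + Σ_{s,t=1}^T β_{st} i_s i_t + γ_i ) for all cells i, for some α ∈ ℝ^T, symmetric B = (β_{st}) and orbit-invariant γ (the GS model), if and only if there exist positive reals a_1,…,a_T, b_1,…,b_T, c_{st} (1 ≤ s < t ≤ T) and a positive orbit-invariant function ψ : I_V → (0,∞) such that π_i = ( ∏_{s=1}^T a_s^{i_s} ) ( ∏_{s=1}^T b_s^{i_s²} ) ( ∏_{1≤s<t≤T} c_{st}^{i_s i_t} ) ψ_i for all cells i (the GLS model of Yamamoto–Tomizawa). (Equivalence of the GS and GLS models.) -/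

import Mathlib

open Finset

namespace GSf

variable {r T : ℕ}

/-- A cell of the `r^T` contingency table. -/
abbrev Cell (r T : ℕ) := Fin T → Fin r

/-- `orbit i = D(i)`: the set of coordinate permutations of the cell `i`. -/
def orbit (i : Cell r T) : Finset (Cell r T) :=
  Finset.univ.filter fun j => ∃ σ : Equiv.Perm (Fin T), j = i ∘ σ

/-- Symmetrization `π^S_i = (1/|D(i)|) ∑_{j ∈ D(i)} π_j`. -/
noncomputable def symmz (π : Cell r T → ℝ) (i : Cell r T) : ℝ :=
  (∑ j ∈ orbit i, π j) / ((orbit i).card : ℝ)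

/-- The quadratic predictor `u_iᵀ α + u_iᵀ B u_i`. -/
def quadForm (u : Fin r → ℝ) (α : Fin T → ℝ) (B : Matrix (Fin T) (Fin T) ℝ)
    (i : Cell r T) : ℝ :=
  (∑ s, α s * u (i s)) + ∑ s, ∑ t, B s t * u (i s) * u (i t)

/-- A function on cells is orbit-invariant if it is constant on each `D(i)`. -/
def OrbitInvariant (γ : Cell r T → ℝ) : Prop :=
  ∀ i j, j ∈ orbit i → γ i = γ j

/-- The `f`-divergence `D_f(p ∥ q) = ∑ q_i f(p_i/q_i)`. -/
noncomputable def Df (f : ℝ → ℝ) (p q : Cell r T → ℝ) : ℝ :=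
  ∑ i, q i * f (p i / q i)

/-- Conditional probability of a cell given its symmetric set. -/
noncomputable def condProb (π : Cell r T → ℝ) (i : Cell r T) : ℝ :=
  π i / ∑ j ∈ orbit i, π j

/-- Complete symmetry (S) model. -/
def CompletelySymmetric (π : Cell r T → ℝ) : Prop :=
  ∀ i, ∀ j ∈ orbit i, π i = π j

/-- Marginal mean `μ_s = ∑_i u_{i_s} π_i`. -/
noncomputable def margMean (u : Fin r → ℝ) (π : Cell r T → ℝ) (s : Fin T) : ℝ :=
  ∑ i, u (i s) * π i

/-- Marginal second moment `∑_i u_{i_s}² π_i`. -/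
noncomputable def margSecond (u : Fin r → ℝ) (π : Cell r T → ℝ) (s : Fin T) : ℝ :=
  ∑ i, u (i s) ^ 2 * π i

/-- Mixed moment `∑_i u_{i_s} u_{i_t} π_i`. -/
noncomputable def mixedMoment (u : Fin r → ℝ) (π : Cell r T → ℝ) (s t : Fin T) : ℝ :=
  ∑ i, u (i s) * u (i t) * π i

/-- Marginal variance `σ_s²`. -/
noncomputable def margVar (u : Fin r → ℝ) (π : Cell r T → ℝ) (s : Fin T) : ℝ :=
  margSecond u π s - (margMean u π s) ^ 2

/-- Marginal correlation `ρ_{st}`. -/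
noncomputable def margCorr (u : Fin r → ℝ) (π : Cell r T → ℝ) (s t : Fin T) : ℝ :=
  (mixedMoment u π s t - margMean u π s * margMean u π t) /
    (Real.sqrt (margVar u π s) * Real.sqrt (margVar u π t))

/-- The GS[f] model. -/
def IsGSf (u : Fin r → ℝ) (F : ℝ → ℝ) (π : Cell r T → ℝ) : Prop :=
  ∃ (α : Fin T → ℝ) (B : Matrix (Fin T) (Fin T) ℝ) (γ : Cell r T → ℝ),
    B.IsSymm ∧ OrbitInvariant γ ∧
    ∀ i, F (π i / symmz π i) = quadForm u α B i + γ i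


lemma mem_orbit_self (i : Cell r T) : i ∈ orbit i := by
  simp only [orbit, mem_filter, mem_univ, true_and]; exact ⟨Equiv.refl _, rfl⟩

lemma orbit_eq {i j : Cell r T} (h : j ∈ orbit i) : orbit j = orbit i := by
  simp only [orbit, mem_filter, mem_univ, true_and] at h
  obtain ⟨σ, rfl⟩ := h
  ext k
  simp only [orbit, mem_filter, mem_univ, true_and]
  constructor
  · rintro ⟨τ, rfl⟩; exact ⟨σ * τ, by ext x; simp [Equiv.Perm.coe_mul]⟩
  · rintro ⟨ρ, rfl⟩; exact ⟨σ⁻¹ * ρ, by ext x; simp [Equiv.Perm.coe_mul]⟩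

lemma symmz_pos {π : Cell r T → ℝ} (hπ : ∀ i, 0 < π i) (i : Cell r T) :
    0 < symmz π i := by
  have hne : (orbit i).Nonempty := ⟨i, mem_orbit_self i⟩
  have h1 : 0 < ∑ j ∈ orbit i, π j := Finset.sum_pos (fun j _ => hπ j) hne
  have h2 : 0 < ((orbit i).card : ℝ) := by exact_mod_cast Finset.card_pos.mpr hne
  exact div_pos h1 h2

lemma symmz_invariant (π : Cell r T → ℝ) {i j : Cell r T} (h : j ∈ orbit i) :
    symmz π i = symmz π j := by
  unfold symmz; rw [orbit_eq h]

lemma quad_split (B : Matrix (Fin T) (Fin T) ℝ) (hB : B.IsSymm) (v : Fin T → ℝ) :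
    ∑ s, ∑ t, B s t * v s * v t =
      (∑ s, B s s * v s ^ 2) +
      ∑ s, ∑ t, (if s < t then 2 * B s t * v s * v t else 0) := by
  have key : ∀ s t : Fin T, B s t * v s * v t =
      (if s = t then B s s * v s ^ 2 else 0) +
      ((if s < t then B s t * v s * v t else 0) +
       (if t < s then B s t * v s * v t else 0)) := by
    intro s t
    rcases lt_trichotomy s t with h | h | h
    · simp [h, h.ne, not_lt_of_gt h]
    · subst h; simp [sq]; ring
    · simp [h, h.ne', not_lt_of_gt h]
  calc ∑ s, ∑ t, B s t * v s * v t
      = ∑ s, ∑ t, ((if s = t then B s s * v s ^ 2 else 0) +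
          ((if s < t then B s t * v s * v t else 0) +
           (if t < s then B s t * v s * v t else 0))) := by
        refine Finset.sum_congr rfl fun s _ => Finset.sum_congr rfl fun t _ => key s t
    _ = (∑ s, B s s * v s ^ 2) +
        ((∑ s, ∑ t, (if s < t then B s t * v s * v t else 0)) +
         (∑ s, ∑ t, (if t < s then B s t * v s * v t else 0))) := by
        simp [Finset.sum_add_distrib, Finset.sum_ite_eq]
    _ = (∑ s, B s s * v s ^ 2) +
        ∑ s, ∑ t, (if s < t then 2 * B s t * v s * v t else 0) := by
        congr 1
        have hswap : (∑ s, ∑ t, (if t < s then B s t * v s * v t else 0)) =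
            ∑ s, ∑ t, (if s < t then B t s * v t * v s else 0) := Finset.sum_comm
        rw [hswap, ← Finset.sum_add_distrib]
        refine Finset.sum_congr rfl fun s _ => ?_
        rw [← Finset.sum_add_distrib]
        refine Finset.sum_congr rfl fun t _ => ?_
        have := hB.apply t s
        split_ifs with h
        · rw [this]; ring
        · ring

lemma exp_lin (α : Fin T → ℝ) (n : Fin T → ℕ) :
    Real.exp (∑ s, α s * (n s : ℝ)) = ∏ s, Real.exp (α s) ^ (n s) := by
  rw [Real.exp_sum]
  refine Finset.prod_congr rfl fun s _ => ?_
  rw [← Real.exp_nat_mul, mul_comm]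

lemma exp_quad (B : Matrix (Fin T) (Fin T) ℝ) (hB : B.IsSymm) (n : Fin T → ℕ) :
    Real.exp (∑ s, ∑ t, B s t * (n s : ℝ) * (n t : ℝ)) =
      (∏ s, Real.exp (B s s) ^ (n s ^ 2)) *
      ∏ s, ∏ t, (if s < t then Real.exp (2 * B s t) ^ (n s * n t) else 1) := by
  rw [quad_split B hB, Real.exp_add, Real.exp_sum]
  congr 1
  · refine Finset.prod_congr rfl fun s _ => ?_
    rw [← Real.exp_nat_mul]
    congr 1; push_cast; ring
  · rw [Real.exp_sum]
    refine Finset.prod_congr rfl fun s _ => ?_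
    rw [Real.exp_sum]
    refine Finset.prod_congr rfl fun t _ => ?_
    split_ifs with h
    · rw [← Real.exp_nat_mul]; congr 1; push_cast; ring
    · exact Real.exp_zero


/-- with integer scores `u_k = k`, the GS model is equivalent to the
GLS model of Yamamoto–Tomizawa. -/
theorem stmt7 (r T : ℕ) (hr : 2 ≤ r) (hT : 2 ≤ T)
    (π : Cell r T → ℝ) (hπ : ∀ i, 0 < π i) (hsum : ∑ i, π i = 1) :
    (∃ (α : Fin T → ℝ) (B : Matrix (Fin T) (Fin T) ℝ) (γ : Cell r T → ℝ),
        B.IsSymm ∧ OrbitInvariant γ ∧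
        ∀ i, π i = symmz π i *
          Real.exp ((∑ s, α s * ((i s : ℕ) + 1 : ℝ)) +
            (∑ s, ∑ t, B s t * ((i s : ℕ) + 1 : ℝ) * ((i t : ℕ) + 1 : ℝ)) + γ i)) ↔
    (∃ (a b : Fin T → ℝ) (c : Fin T → Fin T → ℝ) (ψ : Cell r T → ℝ),
        (∀ s, 0 < a s) ∧ (∀ s, 0 < b s) ∧ (∀ s t, s < t → 0 < c s t) ∧
        (∀ i, 0 < ψ i) ∧ OrbitInvariant ψ ∧
        ∀ i, π i = (∏ s, a s ^ ((i s : ℕ) + 1)) *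
          (∏ s, b s ^ (((i s : ℕ) + 1) ^ 2)) *
          (∏ s, ∏ t, if s < t then c s t ^ (((i s : ℕ) + 1) * ((i t : ℕ) + 1)) else 1) *
          ψ i) := by
  constructor
  · rintro ⟨α, B, γ, hBsym, hγ, h⟩
    refine ⟨fun s => Real.exp (α s), fun s => Real.exp (B s s),
      fun s t => Real.exp (2 * B s t), fun i => symmz π i * Real.exp (γ i),
      fun s => Real.exp_pos _, fun s => Real.exp_pos _, fun s t _ => Real.exp_pos _,
      fun i => mul_pos (symmz_pos hπ i) (Real.exp_pos _), ?_, ?_⟩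
    · intro i j hj
      dsimp only
      rw [symmz_invariant π hj, hγ i j hj]
    · intro i
      have hL := exp_lin α (fun s => (i s : ℕ) + 1)
      have hQ := exp_quad B hBsym (fun s => (i s : ℕ) + 1)
      push_cast at hL hQ
      rw [h i, Real.exp_add, Real.exp_add, hL, hQ]
      ring
  · rintro ⟨a, b, c, ψ, ha, hb, hc, hψ, hψinv, h⟩
    set B : Matrix (Fin T) (Fin T) ℝ := fun s t =>
      if s = t then Real.log (b s)
      else if s < t then Real.log (c s t) / 2 else Real.log (c t s) / 2 with hBdef
    have hBsym : B.IsSymm := by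
      ext s t
      rw [Matrix.transpose_apply]; simp only [hBdef]
      rcases lt_trichotomy s t with hlt | heq | hgt
      · simp [hlt, hlt.ne, hlt.ne', not_lt_of_gt hlt]
      · subst heq; simp
      · simp [hgt, hgt.ne, hgt.ne', not_lt_of_gt hgt]
    refine ⟨fun s => Real.log (a s), B, fun i => Real.log (ψ i / symmz π i),
      hBsym, ?_, ?_⟩
    · intro i j hj
      dsimp only
      rw [hψinv i j hj, symmz_invariant π hj]
    · intro i
      have hL := exp_lin (fun s => Real.log (a s)) (fun s => (i s : ℕ) + 1)
      have hQ := exp_quad B hBsym (fun s => (i s : ℕ) + 1)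
      push_cast at hL hQ
      rw [Real.exp_add, Real.exp_add, hL, hQ,
        Real.exp_log (div_pos (hψ i) (symmz_pos hπ i))]
      have e1 : (∏ s, Real.exp (Real.log (a s)) ^ ((i s : ℕ) + 1)) =
          ∏ s, a s ^ ((i s : ℕ) + 1) :=
        Finset.prod_congr rfl fun s _ => by rw [Real.exp_log (ha s)]
      have e2 : (∏ s, Real.exp (B s s) ^ (((i s : ℕ) + 1) ^ 2)) =
          ∏ s, b s ^ (((i s : ℕ) + 1) ^ 2) :=
        Finset.prod_congr rfl fun s _ => by
          simp only [hBdef, if_pos rfl, Real.exp_log (hb s)]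
      have e3 : (∏ s, ∏ t, (if s < t then
            Real.exp (2 * B s t) ^ (((i s : ℕ) + 1) * ((i t : ℕ) + 1)) else 1)) =
          ∏ s, ∏ t, (if s < t then c s t ^ (((i s : ℕ) + 1) * ((i t : ℕ) + 1)) else 1) := by
        refine Finset.prod_congr rfl fun s _ => Finset.prod_congr rfl fun t _ => ?_
        split_ifs with hst
        · have : B s t = Real.log (c s t) / 2 := by simp [hBdef, hst.ne, hst]
          rw [this]
          have : 2 * (Real.log (c s t) / 2) = Real.log (c s t) := by ring
          rw [this, Real.exp_log (hc s t hst)]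
        · rfl
      have hs := (symmz_pos hπ i).ne'
      have key : ∀ X : ℝ, symmz π i * (X * (ψ i / symmz π i)) = X * ψ i := by
        intro X
        rw [mul_comm, mul_assoc, div_mul_cancel₀ _ hs]
      rw [e1, e2, e3, key, h i]
      ring


end GSf
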